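/- Let G be a graph on n vertices with minimum degree δ(G) ≥ n − 3. Then oh(G) ≥ ⌈n/α(G)⌉. -/

import Mathlib

open SimpleGraph

/-- The spanning subgraph of `G` consisting of the edges that are bichromatic
(i.e. whose two endpoints receive different colors) under the 2-coloring `c`. -/
def SimpleGraph.bichromaticSubgraph {V : Type*} (G : SimpleGraph V) (c : V → Bool) :
    SimpleGraph V where
  Adj u v := G.Adj u v ∧ c u ≠ c v
  symm := ⟨fun u v h => ⟨h.1.symm, h.2.symm⟩⟩
  loopless := ⟨fun v h => h.2 rfl⟩

/-- `G` contains an odd `K t` minor: there are `t` pairwise disjoint nonempty branch sets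
and a 2-coloring of the vertices such that each branch set induces a connected subgraph
using only bichromatic edges (so it carries a spanning tree all of whose edges are
bichromatic), and every two branch sets are joined by a monochromatic edge of `G`. -/
def SimpleGraph.HasOddKMinor {V : Type*} (G : SimpleGraph V) (t : ℕ) : Prop :=
  ∃ (c : V → Bool) (B : Fin t → Set V),
    (∀ i, (B i).Nonempty) ∧
    (Pairwise fun i j => Disjoint (B i) (B j)) ∧
    (∀ i, ((G.bichromaticSubgraph c).induce (B i)).Connected) ∧
    (∀ i j, i ≠ j → ∃ u ∈ B i, ∃ v ∈ B j, G.Adj u v ∧ c u = c v)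

/-- `oh G` is the largest `t` such that `G` contains an odd `K t` minor. -/
noncomputable def SimpleGraph.oh {V : Type*} (G : SimpleGraph V) : ℕ :=
  sSup {t | G.HasOddKMinor t}

/-- The independence number of `G`. -/
noncomputable def SimpleGraph.indepNum' {V : Type*} (G : SimpleGraph V) : ℕ :=
  Gᶜ.cliqueNum

/-- The join of two vertex-disjoint graphs: take the disjoint union and add all
edges between the two parts. -/
def SimpleGraph.joinG {α β : Type*} (G : SimpleGraph α) (H : SimpleGraph β) :
    SimpleGraph (α ⊕ β) where
  Adj u v := match u, v with
    | Sum.inl a, Sum.inl b => G.Adj a b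
    | Sum.inr a, Sum.inr b => H.Adj a b
    | _, _ => True
  symm := by constructor; rintro (a | a) (b | b) h <;> first | exact h.symm | trivial
  loopless := by constructor; rintro (a | a) h <;> exact h.ne rfl

/-!
Write `H = Gᶜ`. The degree condition says `Δ(H) ≤ 2`, so `α(G) = ω(H) ≤ 3`. The odd minors
used have branch sets of one or two vertices, each with a root coloured `true`; two families on
disjoint vertex sets glue to one whenever the roots of the first are adjacent in `G` to every
vertex of the second.

If `α(G) ∈ {1, 3}`, a greedy independent set of `H` of size `⌈n/3⌉` (all of `V` when
`α(G) = 1`) is a clique of `G`, and its vertices are singleton branch sets. If `α(G) = 2`, then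
`H` is triangle-free of maximum degree `2`, and we repeatedly peel off a piece `P` of the
remaining vertices, carrying at least `|P|/2` branch sets whose roots have all their remaining
`H`-neighbours in `P`. A vertex `v` with at most one remaining `H`-neighbour `w` gives the branch
set `{v}` on `P = {v, w}`. Otherwise `H` is 2-regular on what remains; take a path `a' a v b`
there and the branch sets `{a, b}`, `{v, a'}` (joined by the `false`–`false` edge `b a'` of `G`),
or `{a}`, `{b}` if `a' b` closes a four-cycle of `H`.
-/

open Finset

namespace SimpleGraph

variable {V : Type*} {G : SimpleGraph V}

lemma induce_bichromaticSubgraph_congr {c c' : V → Bool} {S : Set V} (h : S.EqOn c c') :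
    (G.bichromaticSubgraph c).induce S = (G.bichromaticSubgraph c').induce S := by
  ext u v
  simp [bichromaticSubgraph, h u.2, h v.2]

lemma HasOddKMinor.le_card [Fintype V] {t : ℕ} (h : G.HasOddKMinor t) : t ≤ Fintype.card V := by
  obtain ⟨-, B, hne, hdisj, -, -⟩ := h
  choose x hx using hne
  simpa using Fintype.card_le_of_injective x fun i j hij =>
    by_contra fun hne => (hdisj hne).ne_of_mem (hx i) (hx j) hij

lemma HasOddKMinor.le_oh [Fintype V] {t : ℕ} (h : G.HasOddKMinor t) : t ≤ G.oh :=
  le_csSup ⟨Fintype.card V, fun _ => HasOddKMinor.le_card⟩ h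

structure RootedOddModel (G : SimpleGraph V) (s : Set V) (ι : Type*) where
  color : V → Bool
  branch : ι → Set V
  root : ι → V
  root_mem : ∀ i, root i ∈ branch i
  color_root : ∀ i, color (root i) = true
  branch_subset : ∀ i, branch i ⊆ s
  pairwise_disjoint : Pairwise fun i j => Disjoint (branch i) (branch j)
  connected : ∀ i, ((G.bichromaticSubgraph color).induce (branch i)).Connected
  joined : ∀ i j, i ≠ j →
    ∃ u ∈ branch i, ∃ v ∈ branch j, G.Adj u v ∧ color u = color v

namespace RootedOddModel

variable {s t : Set V} {ι κ : Type*}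

lemma hasOddKMinor {n : ℕ} (M : G.RootedOddModel s (Fin n)) : G.HasOddKMinor n :=
  ⟨M.color, M.branch, fun i => ⟨_, M.root_mem i⟩, M.pairwise_disjoint, M.connected,
    M.joined⟩

def mono (M : G.RootedOddModel s ι) (h : s ⊆ t) : G.RootedOddModel t ι where
  __ := M
  branch_subset i := (M.branch_subset i).trans h

def reindex (M : G.RootedOddModel s ι) (e : κ ≃ ι) : G.RootedOddModel s κ where
  color := M.color
  branch := M.branch ∘ e
  root := M.root ∘ e
  root_mem k := M.root_mem (e k)
  color_root k := M.color_root (e k)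
  branch_subset k := M.branch_subset (e k)
  pairwise_disjoint := M.pairwise_disjoint.comp_of_injective e.injective
  connected k := M.connected (e k)
  joined k l h := M.joined (e k) (e l) (e.injective.ne h)

def ofIsEmpty [IsEmpty ι] : G.RootedOddModel s ι where
  color _ := true
  branch := isEmptyElim
  root := isEmptyElim
  root_mem := isEmptyElim
  color_root := isEmptyElim
  branch_subset := isEmptyElim
  pairwise_disjoint := isEmptyElim
  connected := isEmptyElim
  joined := isEmptyElim

def ofIsClique {T : Finset V} (h : G.IsClique (T : Set V)) : G.RootedOddModel T T where
  color _ := true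
  branch x := {x.1}
  root x := x
  root_mem _ := rfl
  color_root _ := rfl
  branch_subset x := Set.singleton_subset_iff.mpr x.2
  pairwise_disjoint _ _ hxy := Set.disjoint_singleton.mpr (Subtype.coe_ne_coe.mpr hxy)
  connected _ := ⟨.of_subsingleton⟩
  joined x y hxy := ⟨x, rfl, y, rfl, h x.2 y.2 (Subtype.coe_ne_coe.mpr hxy), rfl⟩

open Classical in
noncomputable def sum (M : G.RootedOddModel s ι) (N : G.RootedOddModel t κ) (hst : Disjoint s t)
    (hadj : ∀ i, ∀ x ∈ t, G.Adj (M.root i) x) : G.RootedOddModel (s ∪ t) (ι ⊕ κ) where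
  color := s.piecewise M.color N.color
  branch := Sum.elim M.branch N.branch
  root := Sum.elim M.root N.root
  root_mem := by rintro (i | j); exacts [M.root_mem i, N.root_mem j]
  color_root := by
    rintro (i | j)
    · simpa [Set.piecewise_eq_of_mem _ _ _ (M.branch_subset i (M.root_mem i))] using M.color_root i
    · simpa [Set.piecewise_eq_of_notMem _ _ _
        (hst.subset_compl_left (N.branch_subset j (N.root_mem j)))] using N.color_root j
  branch_subset := by
    rintro (i | j)
    exacts [(M.branch_subset i).trans Set.subset_union_left,
      (N.branch_subset j).trans Set.subset_union_right]
  pairwise_disjoint := by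
    rintro (i | j) (i' | j') h
    · exact M.pairwise_disjoint fun e => h (congrArg _ e)
    · exact hst.mono (M.branch_subset i) (N.branch_subset j')
    · exact hst.symm.mono (N.branch_subset j) (M.branch_subset i')
    · exact N.pairwise_disjoint fun e => h (congrArg _ e)
  connected := by
    rintro (i | j)
    · simpa [induce_bichromaticSubgraph_congr
        ((Set.piecewise_eqOn s M.color N.color).mono (M.branch_subset i))] using M.connected i
    · simpa [induce_bichromaticSubgraph_congr
        ((Set.piecewise_eqOn_compl s M.color N.color).mono
          ((N.branch_subset j).trans hst.subset_compl_left))] using N.connected j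
  joined := by
    have hl : ∀ x ∈ s, s.piecewise M.color N.color x = M.color x :=
      fun x hx => Set.piecewise_eq_of_mem _ _ _ hx
    have hr : ∀ x ∈ t, s.piecewise M.color N.color x = N.color x :=
      fun x hx => Set.piecewise_eq_of_notMem _ _ _ (hst.subset_compl_left hx)
    have hMroot i := M.branch_subset i (M.root_mem i)
    have hNroot j := N.branch_subset j (N.root_mem j)
    rintro (i | j) (i' | j') h
    · obtain ⟨u, hu, v, hv, huv, hc⟩ := M.joined i i' fun e => h (congrArg _ e)
      exact ⟨u, hu, v, hv, huv,
        by rw [hl u (M.branch_subset i hu), hl v (M.branch_subset i' hv), hc]⟩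
    · exact ⟨M.root i, M.root_mem i, N.root j', N.root_mem j', hadj i _ (hNroot j'),
        by rw [hl _ (hMroot i), hr _ (hNroot j'), M.color_root, N.color_root]⟩
    · exact ⟨N.root j, N.root_mem j, M.root i', M.root_mem i', (hadj i' _ (hNroot j)).symm,
        by rw [hl _ (hMroot i'), hr _ (hNroot j), M.color_root, N.color_root]⟩
    · obtain ⟨u, hu, v, hv, huv, hc⟩ := N.joined j j' fun e => h (congrArg _ e)
      exact ⟨u, hu, v, hv, huv,
        by rw [hr u (N.branch_subset j hu), hr v (N.branch_subset j' hv), hc]⟩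

def ofTwoEdges [DecidableEq V] {a b c d : V} (hab : G.Adj a b) (hcd : G.Adj c d) (hbd : G.Adj b d)
    (hac : a ≠ c) (had : a ≠ d) (hbc : b ≠ c) : G.RootedOddModel {a, b, c, d} Bool where
  color x := x = a ∨ x = c
  branch i := bif i then {a, b} else {c, d}
  root i := bif i then a else c
  root_mem := by rintro (_ | _) <;> simp
  color_root := by rintro (_ | _) <;> simp
  branch_subset := by rintro (_ | _) <;> simp [Set.insert_subset_iff]
  pairwise_disjoint := by
    rintro (_ | _) (_ | _) h <;> simp_all [eq_comm, hbd.ne]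
  connected := by
    rintro (_ | _)
    · exact induce_pair_connected_of_adj ⟨hcd, by simp [hcd.ne.symm, hac.symm, had.symm]⟩
    · exact induce_pair_connected_of_adj ⟨hab, by simp [hab.ne.symm, hbc]⟩
  joined := by
    have hb : (b = a ∨ b = c) = False := by simp [hab.ne.symm, hbc]
    have hd : (d = a ∨ d = c) = False := by simp [had.symm, hcd.ne.symm]
    rintro (_ | _) (_ | _) h
    · exact absurd rfl h
    · exact ⟨d, by simp, b, by simp, hbd.symm, by simp [hb, hd]⟩
    · exact ⟨b, by simp, d, by simp, hbd, by simp [hb, hd]⟩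
    · exact absurd rfl h

end RootedOddModel

lemma adj_of_ne_of_not_compl_adj {v w : V} (hvw : v ≠ w) (h : ¬Gᶜ.Adj v w) : G.Adj v w :=
  not_not.mp fun hG => h ⟨hvw, hG⟩

lemma eq_or_eq_of_adj_of_degree_le_two {x y z w : V} [Fintype (G.neighborSet x)]
    (hx : G.degree x ≤ 2) (hy : G.Adj x y) (hz : G.Adj x z) (hyz : y ≠ z) (hw : G.Adj x w) :
    w = y ∨ w = z := by
  classical
  have hN : {y, z} = G.neighborFinset x :=
    eq_of_subset_of_card_le (by simp [insert_subset_iff, hy, hz]) (by rwa [card_pair hyz])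
  simpa [← hN] using (mem_neighborFinset G x w).mpr hw

lemma cliqueFree_of_cliqueNum_lt [Finite V] {n : ℕ} (h : G.cliqueNum < n) : G.CliqueFree n :=
  fun _ hs => (hs.card_eq ▸ hs.isClique.card_le_cliqueNum).not_gt h

section Degree

variable [Fintype V] [DecidableRel G.Adj]

lemma cliqueNum_le_of_forall_degree_le {d : ℕ} (hdeg : ∀ v, G.degree v ≤ d) :
    G.cliqueNum ≤ d + 1 := by
  classical
  obtain ⟨s, hs⟩ := G.exists_isNClique_cliqueNum
  rw [← hs.card_eq]
  obtain rfl | ⟨a, ha⟩ := s.eq_empty_or_nonempty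
  · simp
  have hsub : s ⊆ insert a (G.neighborFinset a) := fun x hx => by
    rcases eq_or_ne a x with rfl | hax
    · exact mem_insert_self _ _
    · exact mem_insert_of_mem ((mem_neighborFinset G a x).mpr (hs.isClique ha hx hax))
  calc #s ≤ #(insert a (G.neighborFinset a)) := card_le_card hsub
    _ ≤ d + 1 := (card_insert_le _ _).trans (by simpa using hdeg a)

lemma exists_isIndepSet_subset_card_le_mul [DecidableEq V] {d : ℕ}
    (hdeg : ∀ v, G.degree v ≤ d) (s : Finset V) :
    ∃ T ⊆ s, G.IsIndepSet (T : Set V) ∧ #s ≤ (d + 1) * #T := by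
  induction s using Finset.strongInduction with | H s ih =>
  obtain rfl | ⟨v, hv⟩ := s.eq_empty_or_nonempty
  · exact ⟨∅, empty_subset _, by simp, by simp⟩
  set P := insert v (G.neighborFinset v)
  obtain ⟨T, hTs, hT, hcard⟩ := ih (s \ P) <|
    (ssubset_iff_of_subset sdiff_subset).mpr ⟨v, hv, by simp [P]⟩
  have hvT : v ∉ T := fun h => (mem_sdiff.mp (hTs h)).2 (mem_insert_self _ _)
  have hnadj : ∀ w ∈ T, ¬G.Adj v w := fun w hw hvw =>
    (mem_sdiff.mp (hTs hw)).2 (mem_insert_of_mem ((mem_neighborFinset G v w).mpr hvw))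
  refine ⟨insert v T, insert_subset hv (hTs.trans sdiff_subset), ?_, ?_⟩
  · rw [coe_insert]
    exact hT.insert fun w hw _ => ⟨hnadj w hw, fun h => hnadj w hw h.symm⟩
  · have hP : #P ≤ d + 1 := (card_insert_le _ _).trans (by simpa using hdeg v)
    rw [card_insert_of_notMem hvT]
    linarith [card_le_card_sdiff_add_card (s := s) (t := P)]

end Degree

def IsDetachable (G : SimpleGraph V) (s P : Finset V) : Prop :=
  P ⊆ s ∧ P.Nonempty ∧ ∃ t, ∃ M : G.RootedOddModel P (Fin t),
    (∀ i, ∀ y ∈ s, Gᶜ.Adj (M.root i) y → y ∈ P) ∧ #P ≤ 2 * t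

lemma isDetachable_of_rootedOddModel {ι : Type*} [Fintype ι] {Q : Set V} {s P : Finset V}
    (M : G.RootedOddModel Q ι) (hQP : Q ⊆ P) (hPs : P ⊆ s) (hP : P.Nonempty)
    (hroot : ∀ i, ∀ y ∈ s, Gᶜ.Adj (M.root i) y → y ∈ P)
    (hcard : #P ≤ 2 * Fintype.card ι) :
    G.IsDetachable s P :=
  ⟨hPs, hP, _, (M.mono hQP).reindex (Fintype.equivFin ι).symm, fun _ => hroot _, hcard⟩

section ComplementMaxDegreeTwo

variable [DecidableEq V] [DecidableRel G.Adj]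

lemma isDetachable_of_card_filter_le_one {s : Finset V} {v : V} (hv : v ∈ s)
    (h : #(s.filter (Gᶜ.Adj v)) ≤ 1) : G.IsDetachable s (insert v (s.filter (Gᶜ.Adj v))) := by
  refine isDetachable_of_rootedOddModel (RootedOddModel.ofIsClique (T := {v}) (by simp))
    (by simp) (insert_subset hv (filter_subset _ _)) (insert_nonempty _ _) ?_ ?_
  · rintro ⟨i, hi⟩ y hy hiy
    obtain rfl := mem_singleton.mp hi
    exact mem_insert_of_mem (mem_filter.mpr ⟨hy, hiy⟩)
  · rw [Fintype.card_coe, card_singleton]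
    exact (card_insert_le _ _).trans (by omega)

lemma exists_isDetachable_of_one_lt_card_filter [Fintype V] (hdeg : ∀ v, Gᶜ.degree v ≤ 2)
    (htri : Gᶜ.CliqueFree 3) {s : Finset V} {v : V} (hv : v ∈ s)
    (h : ∀ u ∈ s, 1 < #(s.filter (Gᶜ.Adj u))) : ∃ P, G.IsDetachable s P := by
  obtain ⟨a, ha, b, hb, hab⟩ := one_lt_card.mp (h v hv)
  rw [mem_filter] at ha hb
  obtain ⟨a', ha', ha'v⟩ := exists_mem_ne (h a ha.1) v
  rw [mem_filter] at ha'
  have hva : ∀ y, Gᶜ.Adj v y → y = a ∨ y = b :=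
    fun y => eq_or_eq_of_adj_of_degree_le_two (hdeg v) ha.2 hb.2 hab
  have haa : ∀ y, Gᶜ.Adj a y → y = v ∨ y = a' :=
    fun y => eq_or_eq_of_adj_of_degree_le_two (hdeg a) ha.2.symm ha'.2 ha'v.symm
  have hab' : ¬Gᶜ.Adj a b := isIndepSet_neighborSet_of_triangleFree _ htri v ha.2 hb.2 hab
  have ha'b : a' ≠ b := by rintro rfl; exact hab' ha'.2
  have hPs : ({a, b, v, a'} : Finset V) ⊆ s := by simp [insert_subset_iff, ha.1, hb.1, hv, ha'.1]
  have hP : #({a, b, v, a'} : Finset V) ≤ 4 := card_le_four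
  by_cases hba' : Gᶜ.Adj b a'
  · -- `v a a' b` is a four-cycle of `Gᶜ`
    have hbb : ∀ y, Gᶜ.Adj b y → y = v ∨ y = a' :=
      fun y => eq_or_eq_of_adj_of_degree_le_two (hdeg b) hb.2.symm hba' ha'v.symm
    refine ⟨_, isDetachable_of_rootedOddModel (RootedOddModel.ofIsClique (T := {a, b}) ?_)
      (by simp [Set.insert_subset_iff]) hPs (insert_nonempty _ _) ?_
      (by rwa [Fintype.card_coe, card_pair hab])⟩
    · simpa [hab] using adj_of_ne_of_not_compl_adj hab hab'
    · rintro ⟨i, hi⟩ y - hiy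
      rcases mem_insert.mp hi with rfl | hi
      · rcases haa y hiy with rfl | rfl <;> simp
      · obtain rfl := mem_singleton.mp hi
        rcases hbb y hiy with rfl | rfl <;> simp
  · have hva' : a' ≠ a := fun e => ha'.2.ne e.symm
    refine ⟨_, isDetachable_of_rootedOddModel (RootedOddModel.ofTwoEdges
      (adj_of_ne_of_not_compl_adj hab hab')
      (adj_of_ne_of_not_compl_adj ha'v.symm fun h => (hva a' h).elim hva' ha'b)
      (adj_of_ne_of_not_compl_adj ha'b.symm hba') ha.2.ne.symm ha'.2.ne hb.2.ne.symm)
      (by simp) hPs (insert_nonempty _ _) ?_ (by simpa)⟩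
    rintro (_ | _) y - hiy
    · rcases hva y hiy with rfl | rfl <;> simp
    · rcases haa y hiy with rfl | rfl <;> simp

theorem exists_rootedOddModel_of_compl_degree_le_two [Fintype V] (hdeg : ∀ v, Gᶜ.degree v ≤ 2)
    (htri : Gᶜ.CliqueFree 3) (s : Finset V) :
    ∃ t, Nonempty (G.RootedOddModel s (Fin t)) ∧ #s ≤ 2 * t := by
  induction s using Finset.strongInduction with | H s ih =>
  obtain rfl | ⟨v, hv⟩ := s.eq_empty_or_nonempty
  · exact ⟨0, ⟨.ofIsEmpty⟩, by simp⟩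
  obtain ⟨P, hPs, hPne, t, M, hroot, hP⟩ : ∃ P, G.IsDetachable s P := by
    by_cases h : ∃ u ∈ s, #(s.filter (Gᶜ.Adj u)) ≤ 1
    · obtain ⟨u, hu, h⟩ := h
      exact ⟨_, isDetachable_of_card_filter_le_one hu h⟩
    · push Not at h
      exact exists_isDetachable_of_one_lt_card_filter hdeg htri hv h
  obtain ⟨t', ⟨N⟩, hN⟩ := ih (s \ P) (sdiff_ssubset hPs hPne)
  have hadj : ∀ i, ∀ x ∈ (↑(s \ P) : Set V), G.Adj (M.root i) x := fun i x hx => by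
    rw [mem_coe, mem_sdiff] at hx
    exact adj_of_ne_of_not_compl_adj (fun e => hx.2 (e ▸ M.branch_subset i (M.root_mem i)))
      fun h => hx.2 (hroot i x hx.1 h)
  refine ⟨t + t', ⟨((M.sum N ?_ hadj).mono ?_).reindex finSumFinEquiv.symm⟩, ?_⟩
  · exact disjoint_coe.mpr disjoint_sdiff
  · simpa using hPs
  · linarith [card_sdiff_add_card_eq_card hPs]

end ComplementMaxDegreeTwo

end SimpleGraph

theorem statement9 {V : Type*} [Fintype V] (G : SimpleGraph V) [DecidableRel G.Adj]
    (hδ : (Fintype.card V : ℤ) - 3 ≤ G.minDegree) :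
    (Fintype.card V + G.indepNum' - 1) / G.indepNum' ≤ G.oh := by
  classical
  have hdeg : ∀ v, Gᶜ.degree v ≤ 2 := fun v => by
    have := G.minDegree_le_degree v
    rw [degree_compl]
    omega
  have hclique {T : Finset V} (hT : G.IsClique (T : Set V)) : #T ≤ G.oh :=
    ((RootedOddModel.ofIsClique hT).reindex T.equivFin.symm).hasOddKMinor.le_oh
  have hα3 : G.indepNum' ≤ 3 := cliqueNum_le_of_forall_degree_le hdeg
  obtain hα | hα | hα | hα : G.indepNum' = 0 ∨ G.indepNum' = 1 ∨ G.indepNum' = 2 ∨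
      G.indepNum' = 3 := by omega
  · simp [hα]
  · have hG : Gᶜ = ⊥ :=
      cliqueFree_two.mp (cliqueFree_of_cliqueNum_lt (show G.indepNum' < 2 by omega))
    have := hclique (T := univ) (by simp [isClique_univ, ← compl_eq_bot, hG])
    rw [hα, ← card_univ]
    omega
  · obtain ⟨t, ⟨M⟩, ht⟩ := exists_rootedOddModel_of_compl_degree_le_two hdeg
      (cliqueFree_of_cliqueNum_lt (show G.indepNum' < 3 by omega)) univ
    have := M.hasOddKMinor.le_oh
    rw [hα, ← card_univ]
    omega
  · obtain ⟨T, -, hT, hcard⟩ := exists_isIndepSet_subset_card_le_mul hdeg univ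
    have := hclique ((isIndepSet_compl G).mp hT)
    rw [hα, ← card_univ]
    omega
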